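/- Define the operator L̃u = −u'' − (2/3)·Q̃³·u. Then: (i) the bounded odd function H̃ satisfies L̃H̃ = 0, i.e. H̃''(x) + (2/3)·Q̃(x)³·H̃(x) = 0 for all x ∈ ℝ, and H̃ has exactly one zero (at x = 0); (ii) the function Ĥ(x) = (3x + 2·α⁻¹(x))·H̃(x) − 4 also satisfies L̃Ĥ = 0, the Wronskian is constant with H̃(x)·Ĥ'(x) − Ĥ(x)·H̃'(x) = 3 for all x ∈ ℝ, and Ĥ(x) → +∞ as x → +∞. -/

import Mathlib

open Real MeasureTheory Filter

noncomputable def Qs (x : ℝ) : ℝ := (3/2) * (1 / Real.cosh (x/2))^2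
noncomputable def Hs (x : ℝ) : ℝ := Real.tanh (x/2)
noncomputable def alphaFn (x : ℝ) : ℝ := (1/3) * (Real.sinh x + x)
noncomputable def alphaInv : ℝ → ℝ := Function.invFun alphaFn
noncomputable def Qt (x : ℝ) : ℝ := Qs (alphaInv x)
noncomputable def Ht (x : ℝ) : ℝ := Hs (alphaInv x)
noncomputable def Vpot (x : ℝ) : ℝ := 2 * (Qt x)^2 * (1 - Qt x)

/-!
Substituting `y = α⁻¹(x)` turns everything into identities for `tanh` and `sech`: since
`α'(y) = (1 + cosh y)/3 = (2/3)·cosh²(y/2) = 1/Q(y)`, the inverse `α⁻¹` has derivative `Q̃`,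
whence `H̃' = Q̃²/3`, `Q̃' = -Q̃²H̃` and `H̃² = 1 - (2/3)Q̃`. Both equations and the Wronskian
`p'H̃² + 4H̃' = 3` of `Ĥ = pH̃ - 4`, `p(x) = 3x + 2α⁻¹(x)`, `p' = 3 + 2Q̃`, are then polynomial
identities modulo `H̃² = 1 - (2/3)Q̃`. `H̃` is increasing and vanishes only at `0`, so
`Ĥ(x) ≥ 3H̃(1)·x - 4` for `x ≥ 1`.
-/

theorem Real.hasDerivAt_tanh (x : ℝ) : HasDerivAt tanh (1 - tanh x ^ 2) x := by
  have h := (hasDerivAt_sinh x).div (hasDerivAt_cosh x) (cosh_pos x).ne'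
  rw [show sinh / cosh = tanh from funext fun y => (tanh_eq_sinh_div_cosh y).symm] at h
  refine h.congr_deriv ?_
  have := (cosh_pos x).ne'
  rw [tanh_eq_sinh_div_cosh]
  field_simp

theorem Real.one_div_cosh_sq (x : ℝ) : (1 / cosh x) ^ 2 = 1 - tanh x ^ 2 := by
  have := (cosh_pos x).ne'
  rw [tanh_eq_sinh_div_cosh]
  field_simp
  linear_combination -cosh_sq_sub_sinh_sq x

theorem Qs_eq (y : ℝ) : Qs y = 3 / 2 * (1 - Hs y ^ 2) := by
  rw [Qs, Hs, one_div_cosh_sq]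

theorem hasDerivAt_Hs (y : ℝ) : HasDerivAt Hs (Qs y / 3) y := by
  have h : HasDerivAt Hs ((1 - tanh (y / 2) ^ 2) * (1 / 2)) y :=
    (hasDerivAt_tanh _).comp y ((hasDerivAt_id y).div_const 2)
  refine h.congr_deriv ?_
  rw [Qs_eq, Hs]
  ring

theorem Qs_mul_cosh_add_one (y : ℝ) : Qs y * (cosh y + 1) = 3 := by
  have h := cosh_two_mul (y / 2)
  rw [mul_div_cancel₀ y two_ne_zero] at h
  have := (cosh_pos (y / 2)).ne'
  rw [Qs, h]
  field_simp
  linear_combination -cosh_sq_sub_sinh_sq (y / 2)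

theorem alphaFn_strictMono : StrictMono alphaFn := fun a b h => by
  have := sinh_lt_sinh.mpr h
  simp only [alphaFn]
  linarith

theorem alphaFn_continuous : Continuous alphaFn := by
  unfold alphaFn
  fun_prop

theorem alphaFn_surjective : Function.Surjective alphaFn := by
  have h : (0 : ℝ) < 2 / 3 := by norm_num
  refine alphaFn_continuous.surjective ?_ ?_
  · refine tendsto_atTop_mono' atTop ?_ (tendsto_id.const_mul_atTop h)
    filter_upwards [eventually_ge_atTop 0] with x hx
    have := self_le_sinh_iff.mpr hx
    simp only [alphaFn, id]
    linarith
  · refine tendsto_atBot_mono' atBot ?_ (tendsto_id.const_mul_atBot h)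
    filter_upwards [eventually_le_atBot 0] with x hx
    have := sinh_le_self_iff.mpr hx
    simp only [alphaFn, id]
    linarith

theorem alphaFn_alphaInv (x : ℝ) : alphaFn (alphaInv x) = x :=
  Function.rightInverse_invFun alphaFn_surjective x

theorem alphaInv_alphaFn (y : ℝ) : alphaInv (alphaFn y) = y :=
  Function.leftInverse_invFun alphaFn_strictMono.injective y

theorem alphaInv_strictMono : StrictMono alphaInv := fun a b h => by
  rwa [← alphaFn_strictMono.lt_iff_lt, alphaFn_alphaInv, alphaFn_alphaInv]

theorem alphaInv_continuous : Continuous alphaInv :=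
  alphaInv_strictMono.monotone.continuous_of_surjective
    fun y => ⟨alphaFn y, alphaInv_alphaFn y⟩

theorem alphaInv_zero : alphaInv 0 = 0 := by
  simpa [alphaFn] using alphaInv_alphaFn 0

theorem hasDerivAt_alphaInv (x : ℝ) : HasDerivAt alphaInv (Qt x) x := by
  have hα : HasDerivAt alphaFn ((cosh (alphaInv x) + 1) / 3) (alphaInv x) := by
    refine (((hasDerivAt_sinh _).add (hasDerivAt_id _)).const_mul (1 / 3 : ℝ)).congr_deriv ?_
    ring
  refine (hα.of_local_left_inverse alphaInv_continuous.continuousAt (by positivity)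
    (.of_forall alphaFn_alphaInv)).congr_deriv ?_
  rw [Qt, inv_div, div_eq_iff (by positivity), Qs_mul_cosh_add_one]

theorem Qt_eq (x : ℝ) : Qt x = 3 / 2 * (1 - Ht x ^ 2) := Qs_eq _

theorem hasDerivAt_Ht (x : ℝ) : HasDerivAt Ht (Qt x ^ 2 / 3) x := by
  refine ((hasDerivAt_Hs _).comp x (hasDerivAt_alphaInv x)).congr_deriv ?_
  show Qt x / 3 * Qt x = _
  ring

theorem hasDerivAt_Qt (x : ℝ) : HasDerivAt Qt (-(Qt x ^ 2 * Ht x)) x := by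
  have h := (((hasDerivAt_Ht x).pow 2).const_sub 1).const_mul (3 / 2 : ℝ)
  refine (h.congr_of_eventuallyEq (.of_forall Qt_eq)).congr_deriv ?_
  push_cast
  ring

theorem deriv_Ht : deriv Ht = fun x => Qt x ^ 2 / 3 :=
  funext fun x => (hasDerivAt_Ht x).deriv

theorem hasDerivAt_deriv_Ht (x : ℝ) : HasDerivAt (deriv Ht) (-(2 / 3) * Qt x ^ 3 * Ht x) x := by
  rw [deriv_Ht]
  refine (((hasDerivAt_Qt x).pow 2).div_const 3).congr_deriv ?_
  ring

theorem hasDerivAt_three_mul_add_two_mul_alphaInv (x : ℝ) :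
    HasDerivAt (fun y => 3 * y + 2 * alphaInv y) (3 + 2 * Qt x) x := by
  refine (((hasDerivAt_id x).const_mul 3).add ((hasDerivAt_alphaInv x).const_mul 2)).congr_deriv ?_
  ring

noncomputable def Hhat (x : ℝ) : ℝ := (3 * x + 2 * alphaInv x) * Ht x - 4

theorem hasDerivAt_Hhat (x : ℝ) :
    HasDerivAt Hhat ((3 + 2 * Qt x) * Ht x + (3 * x + 2 * alphaInv x) * (Qt x ^ 2 / 3)) x :=
  ((hasDerivAt_three_mul_add_two_mul_alphaInv x).mul (hasDerivAt_Ht x)).sub_const 4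

theorem hasDerivAt_deriv_Hhat (x : ℝ) :
    HasDerivAt (deriv Hhat) (-(2 / 3) * Qt x ^ 3 * Hhat x) x := by
  rw [show deriv Hhat = _ from funext fun x => (hasDerivAt_Hhat x).deriv]
  have hQ := ((hasDerivAt_Qt x).const_mul 2).const_add 3
  have hH := deriv_Ht ▸ hasDerivAt_deriv_Ht x
  have hp := hasDerivAt_three_mul_add_two_mul_alphaInv x
  refine ((hQ.mul (hasDerivAt_Ht x)).add (hp.mul hH)).congr_deriv ?_
  rw [Hhat]
  linear_combination (-(4 / 3) * Qt x ^ 2) * Qt_eq x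

theorem wronskian_Ht_Hhat (x : ℝ) : Ht x * deriv Hhat x - Hhat x * deriv Ht x = 3 := by
  rw [(hasDerivAt_Hhat x).deriv, (hasDerivAt_Ht x).deriv, Hhat]
  linear_combination (2 / 3 * (3 + 2 * Qt x)) * Qt_eq x

theorem Hs_eq_zero_iff {y : ℝ} : Hs y = 0 ↔ y = 0 := by
  rw [Hs, tanh_injective.eq_iff' tanh_zero]
  constructor <;> intro h <;> linarith

theorem Ht_eq_zero_iff {x : ℝ} : Ht x = 0 ↔ x = 0 := by
  rw [Ht, Hs_eq_zero_iff, alphaInv_strictMono.injective.eq_iff' alphaInv_zero]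

theorem Ht_monotone : Monotone Ht :=
  monotone_of_deriv_nonneg (fun x => (hasDerivAt_Ht x).differentiableAt)
    fun x => by rw [deriv_Ht]; positivity

theorem Ht_one_pos : 0 < Ht 1 := by
  have h0 : Ht 0 = 0 := Ht_eq_zero_iff.mpr rfl
  exact (h0 ▸ Ht_monotone zero_le_one).lt_of_ne' (mt Ht_eq_zero_iff.mp one_ne_zero)

theorem tendsto_Hhat_atTop : Tendsto Hhat atTop atTop := by
  have hlin := tendsto_id.const_mul_atTop (mul_pos three_pos Ht_one_pos)
  refine tendsto_atTop_mono' atTop ?_ (tendsto_atTop_add_const_right _ (-4) hlin)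
  filter_upwards [eventually_ge_atTop 1] with x hx
  have hα : 0 ≤ alphaInv x := alphaInv_zero ▸ alphaInv_strictMono.monotone (by linarith)
  have hH : Ht 1 ≤ Ht x := Ht_monotone hx
  have := Ht_one_pos
  simp only [Hhat, id]
  nlinarith

/-- The kink `H̃` is a zero mode of `L̃u = −u'' − (2/3)Q̃³u` with
a single zero, and `Ĥ(x) = (3x + 2α⁻¹(x))·H̃(x) − 4` is a second, linearly
growing solution with Wronskian `3`. -/
theorem resonance_and_second_solution :
    (∀ x : ℝ, deriv (deriv Ht) x + (2/3) * (Qt x)^3 * Ht x = 0) ∧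
    (∀ x : ℝ, (Ht x = 0 ↔ x = 0)) ∧
    (∀ x : ℝ,
      deriv (deriv (fun y => (3 * y + 2 * alphaInv y) * Ht y - 4)) x
        + (2/3) * (Qt x)^3 * ((3 * x + 2 * alphaInv x) * Ht x - 4) = 0) ∧
    (∀ x : ℝ,
      Ht x * deriv (fun y => (3 * y + 2 * alphaInv y) * Ht y - 4) x
        - ((3 * x + 2 * alphaInv x) * Ht x - 4) * deriv Ht x = 3) ∧
    Filter.Tendsto (fun x => (3 * x + 2 * alphaInv x) * Ht x - 4)
      Filter.atTop Filter.atTop := by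
  refine ⟨fun x => ?_, fun x => Ht_eq_zero_iff, fun x => ?_, wronskian_Ht_Hhat,
    tendsto_Hhat_atTop⟩
  · rw [(hasDerivAt_deriv_Ht x).deriv]
    ring
  · show deriv (deriv Hhat) x + 2 / 3 * Qt x ^ 3 * Hhat x = 0
    rw [(hasDerivAt_deriv_Hhat x).deriv]
    ring
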